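/- arXiv:2209.02759 — 4 statements merged into one kernel-verified Lean document; each statement's English description precedes it below -/
import Mathlib

section
/- Let (aₖ) be a sequence of nonnegative reals. Assume there exist κ ∈ ℕ and constants 0 < c ≤ C < ∞ with c·k^κ ≤ aₖ ≤ C·k^κ for all k in a set S = k₁ℕ ∩ [N, ∞), that the limit L = lim_{k→∞} a_{k·k₀}/(k·k₀)^κ exists for some multiple k₀ of k₁, and that a is monotone along S in the sense that k ≤ l (both in S) implies aₖ ≤ a_{l + k₀}. Then lim_{k ∈ S, k→∞} aₖ/k^κ = L. -/
open Filter

private lemma aux_ratio (c : ℕ) (m : ℕ → ℕ)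
    (hm : ∀ᶠ k in atTop, k ≤ m k + c ∧ m k ≤ k + c) :
    Tendsto (fun k : ℕ => (m k : ℝ) / k) atTop (nhds 1) := by
  have h0 : Tendsto (fun k : ℕ => (c : ℝ) / k) atTop (nhds 0) :=
    tendsto_const_div_atTop_nhds_zero_nat (c : ℝ)
  have hlo : Tendsto (fun k : ℕ => 1 - (c : ℝ) / k) atTop (nhds 1) := by
    simpa using tendsto_const_nhds.sub h0
  have hhi : Tendsto (fun k : ℕ => 1 + (c : ℝ) / k) atTop (nhds 1) := by
    simpa using tendsto_const_nhds.add h0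
  refine tendsto_of_tendsto_of_tendsto_of_le_of_le' hlo hhi ?_ ?_
  · filter_upwards [hm, eventually_ge_atTop 1] with k hk hk1
    have hkpos : (0:ℝ) < k := by exact_mod_cast hk1
    have h : (k:ℝ) ≤ m k + c := by exact_mod_cast hk.1
    rw [show (1:ℝ) - c / k = ((k:ℝ) - c) / k by field_simp]
    gcongr
    linarith
  · filter_upwards [hm, eventually_ge_atTop 1] with k hk hk1
    have hkpos : (0:ℝ) < k := by exact_mod_cast hk1
    have h : (m k : ℝ) ≤ k + c := by exact_mod_cast hk.2
    rw [show (1:ℝ) + c / k = ((k:ℝ) + c) / k by field_simp]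
    gcongr

private lemma aux_main (a : ℕ → ℝ) (κ k₀ : ℕ) (hk₀ : 0 < k₀) (L : ℝ)
    (hlim : Tendsto (fun k : ℕ => a (k * k₀) / ((k * k₀ : ℕ) : ℝ) ^ κ)
      atTop (nhds L))
    (q : ℕ → ℕ) (hq : Tendsto q atTop atTop) (c : ℕ)
    (hb : ∀ᶠ k in atTop, k ≤ q k * k₀ + c ∧ q k * k₀ ≤ k + c) :
    Tendsto (fun k : ℕ => a (q k * k₀) / (k : ℝ) ^ κ) atTop (nhds L) := by
  have hr : Tendsto (fun k : ℕ => ((q k * k₀ : ℕ) : ℝ) / k) atTop (nhds 1) :=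
    aux_ratio c _ hb
  have h1 : Tendsto (fun k : ℕ =>
      (a (q k * k₀) / ((q k * k₀ : ℕ) : ℝ) ^ κ) * (((q k * k₀ : ℕ) : ℝ) / k) ^ κ)
      atTop (nhds (L * 1 ^ κ)) := (hlim.comp hq).mul (hr.pow κ)
  rw [one_pow, mul_one] at h1
  refine h1.congr' ?_
  filter_upwards [hq.eventually_ge_atTop 1, eventually_ge_atTop 1] with k hk1 hk2
  have hn : (0:ℝ) < ((q k * k₀ : ℕ) : ℝ) := by
    have : 0 < q k * k₀ := Nat.mul_pos hk1 hk₀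
    exact_mod_cast this
  have hkpos : (0:ℝ) < (k:ℝ) := by exact_mod_cast hk2
  field_simp
  rw [mul_assoc, div_pow, div_mul_cancel₀ _ (pow_ne_zero _ hkpos.ne')]

/-- Let `a` be a nonnegative sequence, `S = k₁ℕ ∩ [N, ∞)`, with
two-sided bounds `c·k^κ ≤ a k ≤ C·k^κ` on `S`, monotone along `S` in the sense
that `k ≤ l` (both in `S`) implies `a k ≤ a (l + k₀)`, and such that the limit
`L = lim a (k·k₀)/(k·k₀)^κ` exists for a multiple `k₀` of `k₁`.  Then
`a k / k^κ → L` as `k → ∞` along `S`. -/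
theorem limit_along_semigroup (a : ℕ → ℝ) (hnn : ∀ k, 0 ≤ a k)
    (κ : ℕ) (c C : ℝ) (hc : 0 < c) (hcC : c ≤ C)
    (k₁ N k₀ : ℕ) (hk₁ : 0 < k₁) (hN : 0 < N) (hk₀ : 0 < k₀)
    (hdvd : k₁ ∣ k₀)
    (S : Set ℕ) (hS : S = {k : ℕ | k₁ ∣ k ∧ N ≤ k})
    (hbound : ∀ k ∈ S, c * (k : ℝ) ^ κ ≤ a k ∧ a k ≤ C * (k : ℝ) ^ κ)
    (hmono : ∀ k ∈ S, ∀ l ∈ S, k ≤ l → a k ≤ a (l + k₀))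
    (L : ℝ)
    (hlim : Tendsto (fun k : ℕ => a (k * k₀) / ((k * k₀ : ℕ) : ℝ) ^ κ)
      atTop (nhds L)) :
    Tendsto (fun k : ℕ => a k / (k : ℝ) ^ κ) (atTop ⊓ Filter.principal S)
      (nhds L) := by
  subst hS
  -- tendsto of the quotient maps
  have hqdiv : Tendsto (fun k : ℕ => k / k₀) atTop atTop := by
    refine tendsto_atTop_atTop.2 fun b => ⟨b * k₀, fun k hk => ?_⟩
    exact (Nat.le_div_iff_mul_le hk₀).2 hk
  have hqm : Tendsto (fun k : ℕ => k / k₀ - 1) atTop atTop :=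
    (tendsto_sub_atTop_nat 1).comp hqdiv
  have hqp : Tendsto (fun k : ℕ => k / k₀ + 2) atTop atTop :=
    (tendsto_add_atTop_nat 2).comp hqdiv
  -- bounds on the approximating multiples
  have hbgen : ∀ᶠ k in atTop, k / k₀ * k₀ ≤ k ∧ k < k / k₀ * k₀ + k₀ ∧ 2 * k₀ ≤ k := by
    filter_upwards [eventually_ge_atTop (2 * k₀)] with k hk
    refine ⟨Nat.div_mul_le_self k k₀, ?_, hk⟩
    have := (Nat.div_lt_iff_lt_mul hk₀).1 (Nat.lt_succ_self (k / k₀))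
    rw [Nat.succ_mul] at this
    omega
  have hbm : ∀ᶠ k in atTop,
      k ≤ (k / k₀ - 1) * k₀ + 2 * k₀ ∧ (k / k₀ - 1) * k₀ ≤ k + 2 * k₀ := by
    filter_upwards [hbgen] with k hk
    obtain ⟨h1, h2, h3⟩ := hk
    have e1 : (k / k₀ - 1) * k₀ = k / k₀ * k₀ - k₀ := by rw [Nat.sub_one_mul]
    omega
  have hbp : ∀ᶠ k in atTop,
      k ≤ (k / k₀ + 2) * k₀ + 2 * k₀ ∧ (k / k₀ + 2) * k₀ ≤ k + 2 * k₀ := by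
    filter_upwards [hbgen] with k hk
    obtain ⟨h1, h2, h3⟩ := hk
    have e1 : (k / k₀ + 2) * k₀ = k / k₀ * k₀ + 2 * k₀ := by ring
    omega
  have hlow : Tendsto (fun k : ℕ => a ((k / k₀ - 1) * k₀) / (k : ℝ) ^ κ)
      atTop (nhds L) := aux_main a κ k₀ hk₀ L hlim _ hqm (2 * k₀) hbm
  have hhigh : Tendsto (fun k : ℕ => a ((k / k₀ + 2) * k₀) / (k : ℝ) ^ κ)
      atTop (nhds L) := aux_main a κ k₀ hk₀ L hlim _ hqp (2 * k₀) hbp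
  -- sandwich along the filter
  have hev : ∀ᶠ k in atTop ⊓ Filter.principal {k : ℕ | k₁ ∣ k ∧ N ≤ k},
      a ((k / k₀ - 1) * k₀) ≤ a k ∧ a k ≤ a ((k / k₀ + 2) * k₀) := by
    rw [eventually_inf_principal]
    filter_upwards [hbgen, eventually_ge_atTop (N + 2 * k₀)] with k hk hkN hkS
    obtain ⟨h1, h2, h3⟩ := hk
    obtain ⟨hd, hN'⟩ := hkS
    have e1 : (k / k₀ - 1) * k₀ = k / k₀ * k₀ - k₀ := by rw [Nat.sub_one_mul]
    have e2 : (k / k₀ + 1) * k₀ = k / k₀ * k₀ + k₀ := by ring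
    have e3 : (k / k₀ + 2) * k₀ = k / k₀ * k₀ + 2 * k₀ := by ring
    constructor
    · have hmS : (k / k₀ - 1) * k₀ ∈ {k : ℕ | k₁ ∣ k ∧ N ≤ k} :=
        ⟨hdvd.mul_left _, by omega⟩
      have hlS : k - k₀ ∈ {k : ℕ | k₁ ∣ k ∧ N ≤ k} :=
        ⟨Nat.dvd_sub hd hdvd, by omega⟩
      have := hmono _ hmS _ hlS (by omega)
      rwa [Nat.sub_add_cancel (by omega)] at this
    · have hkS' : k ∈ {k : ℕ | k₁ ∣ k ∧ N ≤ k} := ⟨hd, hN'⟩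
      have hlS : (k / k₀ + 1) * k₀ ∈ {k : ℕ | k₁ ∣ k ∧ N ≤ k} :=
        ⟨hdvd.mul_left _, by omega⟩
      have := hmono _ hkS' _ hlS (by omega)
      have e4 : (k / k₀ + 1) * k₀ + k₀ = (k / k₀ + 2) * k₀ := by ring
      rwa [e4] at this
  refine tendsto_of_tendsto_of_tendsto_of_le_of_le'
    (hlow.mono_left inf_le_left) (hhigh.mono_left inf_le_left) ?_ ?_
  · filter_upwards [hev] with k hk
    have : (0:ℝ) ≤ (k:ℝ) ^ κ := by positivity
    gcongr
    exact hk.1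
  · filter_upwards [hev] with k hk
    have : (0:ℝ) ≤ (k:ℝ) ^ κ := by positivity
    gcongr
    exact hk.2
end

section
/- Let a : X' → A be the algebraic reduction of a compact connected complex manifold (so a is a surjective holomorphic map with connected fibers to a projective manifold A inducing an isomorphism of meromorphic function fields M(X') ≅ M(A)). Let N be a non-polar irreducible divisor on X' (not contained in the polar set of any meromorphic function on X') and S a divisor on X' with no common irreducible component with N. Then for every p ≥ 0, multiplication by the canonical section of pN induces an isomorphism H⁰(X', S) ≅ H⁰(X', S + pN). -/
/-!
A section of `S + pN` can only acquire a pole along `N`, and it cannot: `N` is non-polar, so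
every meromorphic function is regular along `N`, while `S` does not contain `N`.
-/

namespace Finsupp

variable {ι M : Type*} [AddCommMonoid M] [PartialOrder M] [IsOrderedAddMonoid M]

theorem nonneg_add_single_iff {D : ι →₀ M} {N : ι} {n : M} (hn : 0 ≤ n) (hD : 0 ≤ D N) :
    0 ≤ D + single N n ↔ 0 ≤ D := by
  classical
  refine ⟨fun h i => ?_, fun h => add_nonneg h (single_nonneg.mpr hn)⟩
  rcases eq_or_ne i N with rfl | hiN
  · exact hD
  · simpa [single_eq_of_ne hiN] using h i

end Finsupp

theorem nonpolar_twist_iso_general {K : Type*} [Field K] {ι : Type*}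
    (div : Kˣ → (ι →₀ ℤ))
    (N : ι) (hN : ∀ f : Kˣ, 0 ≤ div f N)
    (S : ι →₀ ℤ) (hSN : S N = 0) :
    ∀ p : ℕ, {f : Kˣ | 0 ≤ div f + S} =
      {f : Kˣ | 0 ≤ div f + S + Finsupp.single N (p : ℤ)} := by
  intro p
  ext f
  have hf : 0 ≤ (div f + S) N := by simpa [hSN] using hN f
  exact (Finsupp.nonneg_add_single_iff (Int.natCast_nonneg p) hf).symm

/-- Lemma 4: let `a : X' → A` be the algebraic reduction of a
compact connected complex manifold, `N` a non-polar irreducible divisor on `X'`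
and `S` a divisor on `X'` having no common irreducible component with `N`.
Then for every `p ≥ 0`, multiplication by the canonical section of `pN` gives
an isomorphism `H⁰(X', S) ≅ H⁰(X', S + pN)`.

Model: all meromorphic functions on `X'` are pullbacks from `A`
(`M(X') ≅ M(A) = K`), `ι` indexes the prime divisors of `X'` and
`div : Kˣ → (ι →₀ ℤ)` sends `f` to the divisor `a* div(f)` on `X'`.
`N` non-polar means `N` is not contained in the polar set of any meromorphic
function, i.e. `0 ≤ div f N` for every `f`; `S N = 0` says `S` and `N` have no
common component.  Sections of a divisor `T` are the `f ∈ Kˣ` with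
`div f + T ≥ 0` (together with `0`), and multiplication by the canonical
section of `pN` identifies the two section spaces, which therefore coincide as
subsets of `Kˣ`. -/
theorem nonpolar_twist_iso {K : Type*} [Field K] {ι : Type*}
    (div : Kˣ → (ι →₀ ℤ))
    (hdiv : ∀ f g : Kˣ, div (f * g) = div f + div g)
    (N : ι) (hN : ∀ f : Kˣ, 0 ≤ div f N)
    (S : ι →₀ ℤ) (hSN : S N = 0) :
    ∀ p : ℕ, {f : Kˣ | 0 ≤ div f + S} =
      {f : Kˣ | 0 ≤ div f + S + Finsupp.single N (p : ℤ)} :=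
  nonpolar_twist_iso_general div N hN S hSN
end

section
/- Let x₁, …, xₙ and y₁, …, yₙ be positive reals, and suppose (∏xᵢ)^{1/n} + (∏yᵢ)^{1/n} = (∏(xᵢ+yᵢ))^{1/n} (equality in the n-variable Minkowski/superadditivity inequality for geometric means). Then the vectors (x₁,…,xₙ) and (y₁,…,yₙ) are proportional. -/
/-!
Put `a i = x i / (x i + y i)` and `b i = y i / (x i + y i)`, so that `a + b = 1` pointwise and,
dividing the hypothesis by the geometric mean of `x + y`, `G(a) + G(b) = 1`. AM-GM gives
`G(a) ≤ A(a)` and `G(b) ≤ A(b)` with `A(a) + A(b) = 1`, so both are equalities; hence `a` is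
constant, which says exactly that `x` and `y` are proportional.
-/

open Finset

namespace GeomMean

theorem exists_pos_smul_eq_of_div_add_eq {ι : Type*} [Nonempty ι] {x y : ι → ℝ}
    (hx : ∀ i, 0 < x i) (hy : ∀ i, 0 < y i) (hc : ∀ j k, x j / (x j + y j) = x k / (x k + y k)) :
    ∃ t : ℝ, 0 < t ∧ y = t • x := by
  obtain ⟨k⟩ := ‹Nonempty ι›
  refine ⟨y k / x k, div_pos (hy k) (hx k), funext fun j => ?_⟩
  have hjk := hc j k
  have := hx j; have := hx k; have := hy j; have := hy k
  rw [div_eq_div_iff (by positivity) (by positivity)] at hjk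
  simp only [Pi.smul_apply, smul_eq_mul]
  field_simp
  linarith

variable {ι : Type*} [Fintype ι]

noncomputable def geomMean (z : ι → ℝ) : ℝ := (∏ i, z i) ^ ((1 : ℝ) / Fintype.card ι)

theorem geomMean_div {x s : ι → ℝ} (hx : ∀ i, 0 ≤ x i) (hs : ∀ i, 0 ≤ s i) :
    geomMean (fun i => x i / s i) = geomMean x / geomMean s := by
  rw [geomMean, geomMean, geomMean, prod_div_distrib,
    Real.div_rpow (prod_nonneg fun i _ => hx i) (prod_nonneg fun i _ => hs i)]

theorem geomMean_eq_prod_rpow {z : ι → ℝ} (hz : ∀ i, 0 ≤ z i) :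
    geomMean z = ∏ i, z i ^ ((1 : ℝ) / Fintype.card ι) :=
  (Real.finsetProd_rpow _ _ (fun i _ => hz i) _).symm

theorem div_card_eq_sum_mul (z : ι → ℝ) :
    (∑ i, z i) / Fintype.card ι = ∑ i, (1 : ℝ) / Fintype.card ι * z i := by
  rw [← mul_sum, one_div_mul_eq_div]

variable [Nonempty ι]

theorem sum_one_div_card : ∑ _i : ι, (1 : ℝ) / Fintype.card ι = 1 := by
  simp [Fintype.card_ne_zero]

theorem geomMean_le_arithMean {z : ι → ℝ} (hz : ∀ i, 0 ≤ z i) :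
    geomMean z ≤ (∑ i, z i) / Fintype.card ι := by
  rw [geomMean_eq_prod_rpow hz, div_card_eq_sum_mul]
  exact Real.geom_mean_le_arith_mean_weighted _ _ _ (fun i _ => by positivity)
    sum_one_div_card fun i _ => hz i

theorem geomMean_eq_arithMean_iff {z : ι → ℝ} (hz : ∀ i, 0 ≤ z i) :
    geomMean z = (∑ i, z i) / Fintype.card ι ↔ ∀ j k, z j = z k := by
  rw [geomMean_eq_prod_rpow hz, div_card_eq_sum_mul,
    Real.geom_mean_eq_arith_mean_weighted_iff_of_pos _ _ _ (fun i _ => by positivity)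
      sum_one_div_card fun i _ => hz i]
  simp

theorem eq_of_geomMean_add_geomMean_eq_one {a b : ι → ℝ} (ha : ∀ i, 0 ≤ a i)
    (hb : ∀ i, 0 ≤ b i) (hab : ∀ i, a i + b i = 1) (hG : geomMean a + geomMean b = 1) :
    ∀ j k, a j = a k := by
  have hA : (∑ i, a i) / Fintype.card ι + (∑ i, b i) / Fintype.card ι = 1 := by
    rw [← add_div, ← sum_add_distrib, sum_congr rfl fun i _ => hab i, sum_const, card_univ,
      nsmul_one, div_self (Nat.cast_ne_zero.mpr Fintype.card_ne_zero)]
  have hGa := geomMean_le_arithMean ha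
  have hGb := geomMean_le_arithMean hb
  exact (geomMean_eq_arithMean_iff ha).mp (by linarith)

theorem exists_pos_smul_eq_of_geomMean_add_eq {x y : ι → ℝ} (hx : ∀ i, 0 < x i)
    (hy : ∀ i, 0 < y i) (heq : geomMean x + geomMean y = geomMean (x + y)) :
    ∃ t : ℝ, 0 < t ∧ y = t • x := by
  have hs : ∀ i, 0 < x i + y i := fun i => add_pos (hx i) (hy i)
  have hGs : 0 < geomMean (x + y) :=
    Real.rpow_pos_of_pos (prod_pos fun i _ => hs i) _
  refine exists_pos_smul_eq_of_div_add_eq hx hy <|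
    eq_of_geomMean_add_geomMean_eq_one (b := fun i => y i / (x i + y i))
      (fun i => (div_pos (hx i) (hs i)).le) (fun i => (div_pos (hy i) (hs i)).le)
      (fun i => by rw [← add_div, div_self (hs i).ne']) ?_
  rw [geomMean_div (fun i => (hx i).le) (fun i => (hs i).le),
    geomMean_div (fun i => (hy i).le) (fun i => (hs i).le), ← add_div, heq]
  exact div_self hGs.ne'

end GeomMean

/-- equality in the superadditivity of geometric means.  If
`x₁, …, xₙ, y₁, …, yₙ > 0` satisfy
`(∏ xᵢ)^{1/n} + (∏ yᵢ)^{1/n} = (∏ (xᵢ + yᵢ))^{1/n}`, then the vectors `x` and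
`y` are proportional. -/
theorem geom_mean_superadditive_equality {n : ℕ} (hn : 0 < n)
    (x y : Fin n → ℝ) (hx : ∀ i, 0 < x i) (hy : ∀ i, 0 < y i)
    (heq : (∏ i, x i) ^ ((1 : ℝ) / n) + (∏ i, y i) ^ ((1 : ℝ) / n)
      = (∏ i, (x i + y i)) ^ ((1 : ℝ) / n)) :
    ∃ t : ℝ, 0 < t ∧ y = t • x := by
  have : Nonempty (Fin n) := ⟨⟨0, hn⟩⟩
  exact GeomMean.exists_pos_smul_eq_of_geomMean_add_eq hx hy
    (by simpa [GeomMean.geomMean] using heq)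
end

section
/- Let Δ₁, Δ₂ ⊂ ℝⁿ be compact convex bodies. Then vol(Δ₁ + Δ₂)^{1/n} ≥ vol(Δ₁)^{1/n} + vol(Δ₂)^{1/n} (Brunn–Minkowski), where Δ₁ + Δ₂ is the Minkowski sum. Consequently, if two big line bundles L₁, L₂ on a projective variety have Okounkov bodies satisfying Δ_v(L₁) + Δ_v(L₂) ⊆ Δ_v(L₁+L₂), then Vol(L₁+L₂)^{1/n} ≥ Vol(L₁)^{1/n} + Vol(L₂)^{1/n}. -/
/-!
Brunn–Minkowski is derived from the Prékopa–Leindler inequality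
`(∫ f) ^ (1 - θ) * (∫ g) ^ θ ≤ ∫ h` whenever `f x ^ (1 - θ) * g y ^ θ ≤ h ((1 - θ) • x + θ • y)`,
applied to indicator functions of rescaled copies of the two sets having equal volume.
Prékopa–Leindler is proved by induction on the dimension via Fubini. In dimension one, after
normalising `f` and `g` to have supremum `1`, the superlevel sets `{f > s}` and `{g > s}` are
nonempty for `s < 1` and their weighted Minkowski sum lies in `{h > s}`; the one-dimensional
Brunn–Minkowski inequality `|X| + |Y| ≤ |X + Y|` and the layer-cake formula then give
`(1 - θ) ∫ f + θ ∫ g ≤ ∫ h`, and weighted AM–GM finishes. The statement about Okounkov bodies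
is Brunn–Minkowski for `Δ₁ + Δ₂ ⊆ Δ₁₂`, multiplied by `(n!) ^ (1 / n)`.
-/

open MeasureTheory Pointwise Set Filter
open scoped ENNReal

namespace ENNReal

theorem geom_mean_le_arith_mean2_weighted {θ : ℝ} (hθ₀ : 0 < θ) (hθ₁ : θ < 1) (a b : ℝ≥0∞) :
    a ^ (1 - θ) * b ^ θ ≤ ENNReal.ofReal (1 - θ) * a + ENNReal.ofReal θ * b := by
  have hθ₁' : 0 < 1 - θ := by linarith
  rcases eq_or_ne a ⊤ with rfl | ha
  · rw [ENNReal.mul_top (ENNReal.ofReal_pos.2 hθ₁').ne', top_add]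
    exact le_top
  rcases eq_or_ne b ⊤ with rfl | hb
  · rw [ENNReal.mul_top (ENNReal.ofReal_pos.2 hθ₀).ne', add_top]
    exact le_top
  lift a to NNReal using ha
  lift b to NNReal using hb
  have key := NNReal.geom_mean_le_arith_mean2_weighted (1 - θ).toNNReal θ.toNNReal a b
    (by rw [← Real.toNNReal_add hθ₁'.le hθ₀.le]; simp)
  rw [Real.coe_toNNReal _ hθ₁'.le, Real.coe_toNNReal _ hθ₀.le] at key
  rw [← ENNReal.coe_rpow_of_nonneg _ hθ₁'.le, ← ENNReal.coe_rpow_of_nonneg _ hθ₀.le]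
  simpa [ENNReal.ofReal] using ENNReal.coe_le_coe.2 key

theorem min_le_rpow_mul_rpow {θ : ℝ} (hθ₀ : 0 ≤ θ) (hθ₁ : θ ≤ 1) (a b : ℝ≥0∞) :
    min a b ≤ a ^ (1 - θ) * b ^ θ :=
  calc min a b = min a b ^ (1 - θ) * min a b ^ θ := by
        rw [← ENNReal.rpow_add_of_nonneg _ _ (by linarith) hθ₀, sub_add_cancel, rpow_one]
    _ ≤ a ^ (1 - θ) * b ^ θ :=
        mul_le_mul' (rpow_le_rpow (min_le_left _ _) (by linarith))
          (rpow_le_rpow (min_le_right _ _) hθ₀)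

theorem iSup_rpow {ι : Sort*} (u : ι → ℝ≥0∞) {p : ℝ} (hp : 0 < p) :
    (⨆ i, u i) ^ p = ⨆ i, u i ^ p :=
  (orderIsoRpow p hp).map_iSup u

end ENNReal

theorem measure_le_of_add_subset {G : Type*} [AddCommGroup G] [MeasurableSpace G]
    [MeasurableAdd G] (μ : Measure G) [μ.IsAddLeftInvariant] {A B S : Set G}
    (hB : B.Nonempty) (hABS : A + B ⊆ S) : μ A ≤ μ S := by
  obtain ⟨y, hy⟩ := hB
  rw [← measure_vadd μ y A]
  exact measure_mono ((add_comm A B ▸ vadd_set_subset_add hy).trans hABS)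

theorem lintegral_eq_iSup_lintegral_min_natCast {α : Type*} [MeasurableSpace α] (μ : Measure α)
    {f : α → ℝ≥0∞} (hf : Measurable f) :
    ∫⁻ x, f x ∂μ = ⨆ N : ℕ, ∫⁻ x, min (f x) N ∂μ := by
  rw [← lintegral_iSup (fun N => hf.min measurable_const)
    fun N M hNM x => min_le_min le_rfl (Nat.cast_le.2 hNM)]
  congr 1 with x
  rw [← inf_iSup_eq, ENNReal.iSup_natCast, inf_top_eq]

theorem Real.volume_setOf_ofReal_lt_inter_Ioi (c : ℝ≥0∞) :
    volume ({t | ENNReal.ofReal t < c} ∩ Ioi 0) = c := by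
  induction c using ENNReal.recTopCoe with
  | top => simp
  | coe c =>
    have : {t : ℝ | ENNReal.ofReal t < c} ∩ Ioi 0 = Ioo 0 (c : ℝ) := by
      ext t
      rw [mem_inter_iff, mem_Ioo, and_comm]
      exact and_congr_right fun ht => by
        simpa using ENNReal.ofReal_lt_iff_lt_toReal ht.le ENNReal.coe_ne_top
    simp [this]

theorem lintegral_eq_lintegral_meas_ofReal_lt {α : Type*} [MeasurableSpace α] (μ : Measure α)
    [SFinite μ] {f : α → ℝ≥0∞} (hf : Measurable f) :
    ∫⁻ x, f x ∂μ = ∫⁻ t in Ioi 0, μ {x | ENNReal.ofReal t < f x} := by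
  have hE : MeasurableSet {p : α × ℝ | ENNReal.ofReal p.2 < f p.1} :=
    measurableSet_lt (ENNReal.measurable_ofReal.comp measurable_snd) (hf.comp measurable_fst)
  have := (Measure.prod_apply hE (μ := μ) (ν := volume.restrict (Ioi 0))).symm.trans
    (Measure.prod_apply_symm hE)
  simpa [preimage, Real.volume_setOf_ofReal_lt_inter_Ioi] using this

namespace Real

theorem volume_add_volume_le_volume_add_of_isCompact {K L : Set ℝ} (hK : IsCompact K)
    (hL : IsCompact L) (hK₀ : K.Nonempty) (hL₀ : L.Nonempty) :
    volume K + volume L ≤ volume (K + L) := by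
  set a := sSup K
  set b := sInf L
  have hb : b +ᵥ K ⊆ K + L := by
    rw [add_comm]
    exact vadd_set_subset_add (hL.sInf_mem hL₀)
  have ha : a +ᵥ L ⊆ K + L := vadd_set_subset_add (hK.sSup_mem hK₀)
  -- `b + K` lies to the left of `b + a` and `a + L` to its right
  have hinter : (b +ᵥ K) ∩ (a +ᵥ L) ⊆ {b + a} := by
    rintro _ ⟨⟨k, hk, rfl⟩, ⟨l, hl, hkl⟩⟩
    have : k ≤ a := le_csSup hK.bddAbove hk
    have : b ≤ l := csInf_le hL.bddBelow hl
    simp only [vadd_eq_add] at hkl ⊢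
    exact mem_singleton_iff.2 (by linarith)
  calc volume K + volume L = volume (b +ᵥ K) + volume (a +ᵥ L) := by
        rw [measure_vadd, measure_vadd]
    _ = volume ((b +ᵥ K) ∪ (a +ᵥ L)) + volume ((b +ᵥ K) ∩ (a +ᵥ L)) :=
        (measure_union_add_inter _ (hL.vadd a).measurableSet).symm
    _ ≤ volume (K + L) + volume {b + a} :=
        add_le_add (measure_mono (union_subset hb ha)) (measure_mono hinter)
    _ = volume (K + L) := by rw [measure_singleton, add_zero]

theorem volume_add_volume_le_of_add_subset {X Y S : Set ℝ} (hX : MeasurableSet X)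
    (hY : MeasurableSet Y) (hX₀ : X.Nonempty) (hY₀ : Y.Nonempty) (hS : X + Y ⊆ S) :
    volume X + volume Y ≤ volume S := by
  obtain ⟨x₀, hx₀⟩ := hX₀
  obtain ⟨y₀, hy₀⟩ := hY₀
  rw [hX.measure_eq_iSup_isCompact, hY.measure_eq_iSup_isCompact]
  simp only [iSup_and']
  refine ENNReal.biSup_add_biSup_le' ⟨∅, empty_subset _, isCompact_empty⟩
    ⟨∅, empty_subset _, isCompact_empty⟩ fun K ⟨hKX, hK⟩ L ⟨hLY, hL⟩ => ?_
  calc volume K + volume L ≤ volume (insert x₀ K) + volume (insert y₀ L) := by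
        gcongr <;> exact subset_insert _ _
    _ ≤ volume (insert x₀ K + insert y₀ L) :=
        volume_add_volume_le_volume_add_of_isCompact (hK.insert x₀) (hL.insert y₀)
          (insert_nonempty _ _) (insert_nonempty _ _)
    _ ≤ volume S :=
        measure_mono ((add_subset_add (insert_subset hx₀ hKX) (insert_subset hy₀ hLY)).trans hS)

theorem weighted_volume_superlevel_add_le {θ : ℝ} (hθ₀ : 0 ≤ θ) (hθ₁ : θ ≤ 1)
    {f g h : ℝ → ℝ≥0∞} (hf : Measurable f) (hg : Measurable g)
    (hfg : ⨆ x, f x = ⨆ y, g y) (hfgh : ∀ x y, min (f x) (g y) ≤ h ((1 - θ) * x + θ * y))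
    (s : ℝ≥0∞) :
    ENNReal.ofReal (1 - θ) * volume {x | s < f x} + ENNReal.ofReal θ * volume {x | s < g x}
      ≤ volume {x | s < h x} := by
  by_cases hs : s < ⨆ x, f x
  · have hf₀ : {x | s < f x}.Nonempty := lt_iSup_iff.1 hs
    have hg₀ : {x | s < g x}.Nonempty := lt_iSup_iff.1 (hfg ▸ hs : s < ⨆ y, g y)
    have hsub : (1 - θ) • {x | s < f x} + θ • {x | s < g x} ⊆ {x | s < h x} := by
      rintro _ ⟨_, ⟨x, hx, rfl⟩, _, ⟨y, hy, rfl⟩, rfl⟩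
      exact (lt_min hx hy).trans_le (hfgh x y)
    have := volume_add_volume_le_of_add_subset
      ((measurableSet_lt measurable_const hf).const_smul₀ _)
      ((measurableSet_lt measurable_const hg).const_smul₀ _) hf₀.smul_set hg₀.smul_set hsub
    rwa [Measure.addHaar_smul_of_nonneg _ (by linarith), Measure.addHaar_smul_of_nonneg _ hθ₀,
      Module.finrank_self, pow_one, pow_one] at this
  · have hf₀ : {x | s < f x} = ∅ :=
      eq_empty_of_forall_notMem fun x hx => hs (hx.trans_le (le_iSup f x))
    have hg₀ : {x | s < g x} = ∅ :=
      eq_empty_of_forall_notMem fun x hx => hs (hfg ▸ hx.trans_le (le_iSup g x))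
    simp [hf₀, hg₀]

theorem weighted_lintegral_add_le_of_min_le {θ : ℝ} (hθ₀ : 0 ≤ θ) (hθ₁ : θ ≤ 1)
    {f g h : ℝ → ℝ≥0∞} (hf : Measurable f) (hg : Measurable g) (hh : Measurable h)
    (hfg : ⨆ x, f x = ⨆ y, g y) (hfgh : ∀ x y, min (f x) (g y) ≤ h ((1 - θ) * x + θ * y)) :
    ENNReal.ofReal (1 - θ) * (∫⁻ x, f x) + ENNReal.ofReal θ * ∫⁻ x, g x ≤ ∫⁻ x, h x := by
  rw [lintegral_eq_lintegral_meas_ofReal_lt _ hf, lintegral_eq_lintegral_meas_ofReal_lt _ hg,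
    lintegral_eq_lintegral_meas_ofReal_lt _ hh]
  calc _ ≤ ∫⁻ t in Ioi 0, ENNReal.ofReal (1 - θ) * volume {x | ENNReal.ofReal t < f x}
          + ENNReal.ofReal θ * volume {x | ENNReal.ofReal t < g x} :=
        (add_le_add (lintegral_const_mul_le _ _) (lintegral_const_mul_le _ _)).trans
          (le_lintegral_add _ _)
    _ ≤ _ := lintegral_mono fun t => weighted_volume_superlevel_add_le hθ₀ hθ₁ hf hg hfg hfgh _

theorem prekopa_leindler_of_iSup_ne_top {θ : ℝ} (hθ₀ : 0 < θ) (hθ₁ : θ < 1)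
    {f g h : ℝ → ℝ≥0∞} (hf : Measurable f) (hg : Measurable g) (hh : Measurable h)
    (hf_top : ⨆ x, f x ≠ ⊤) (hg_top : ⨆ y, g y ≠ ⊤)
    (hfgh : ∀ x y, f x ^ (1 - θ) * g y ^ θ ≤ h ((1 - θ) * x + θ * y)) :
    (∫⁻ x, f x) ^ (1 - θ) * (∫⁻ x, g x) ^ θ ≤ ∫⁻ x, h x := by
  have hθ₁' : 0 < 1 - θ := by linarith
  set a := ⨆ x, f x
  set b := ⨆ y, g y
  rcases eq_or_ne a 0 with ha | ha
  · have hf₀ : ∫⁻ x, f x = 0 := by simp [ENNReal.iSup_eq_zero.1 ha]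
    rw [hf₀, ENNReal.zero_rpow_of_pos hθ₁', zero_mul]
    exact zero_le
  rcases eq_or_ne b 0 with hb | hb
  · have hg₀ : ∫⁻ x, g x = 0 := by simp [ENNReal.iSup_eq_zero.1 hb]
    rw [hg₀, ENNReal.zero_rpow_of_pos hθ₀, mul_zero]
    exact zero_le
  set k := a⁻¹ ^ (1 - θ) * b⁻¹ ^ θ
  have hk₀ : k ≠ 0 := mul_ne_zero
    (ENNReal.rpow_pos (ENNReal.inv_pos.2 hf_top) (ENNReal.inv_ne_top.2 ha)).ne'
    (ENNReal.rpow_pos (ENNReal.inv_pos.2 hg_top) (ENNReal.inv_ne_top.2 hb)).ne'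
  have hk_top : k ≠ ⊤ := ENNReal.mul_ne_top
    (ENNReal.rpow_ne_top_of_nonneg hθ₁'.le (ENNReal.inv_ne_top.2 ha))
    (ENNReal.rpow_ne_top_of_nonneg hθ₀.le (ENNReal.inv_ne_top.2 hb))
  have hscale : ∀ u v : ℝ≥0∞,
      (a⁻¹ * u) ^ (1 - θ) * (b⁻¹ * v) ^ θ = k * (u ^ (1 - θ) * v ^ θ) := by
    intro u v
    rw [ENNReal.mul_rpow_of_nonneg _ _ hθ₁'.le, ENNReal.mul_rpow_of_nonneg _ _ hθ₀.le]
    ring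
  have hmean := weighted_lintegral_add_le_of_min_le hθ₀.le hθ₁.le
    (hf.const_mul a⁻¹) (hg.const_mul b⁻¹) (hh.const_mul k)
    (by rw [← ENNReal.mul_iSup, ← ENNReal.mul_iSup, ENNReal.inv_mul_cancel ha hf_top,
      ENNReal.inv_mul_cancel hb hg_top])
    fun x y => (ENNReal.min_le_rpow_mul_rpow hθ₀.le hθ₁.le _ _).trans
      ((hscale _ _).trans_le (mul_le_mul' le_rfl (hfgh x y)))
  rw [lintegral_const_mul _ hf, lintegral_const_mul _ hg, lintegral_const_mul _ hh] at hmean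
  have := (ENNReal.geom_mean_le_arith_mean2_weighted hθ₀ hθ₁ _ _).trans hmean
  rwa [hscale, ENNReal.mul_le_mul_iff_right hk₀ hk_top] at this

theorem prekopa_leindler {θ : ℝ} (hθ₀ : 0 < θ) (hθ₁ : θ < 1)
    {f g h : ℝ → ℝ≥0∞} (hf : Measurable f) (hg : Measurable g) (hh : Measurable h)
    (hfgh : ∀ x y, f x ^ (1 - θ) * g y ^ θ ≤ h ((1 - θ) * x + θ * y)) :
    (∫⁻ x, f x) ^ (1 - θ) * (∫⁻ x, g x) ^ θ ≤ ∫⁻ x, h x := by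
  have hθ₁' : 0 < 1 - θ := by linarith
  have htrunc : ∀ N M : ℕ,
      (∫⁻ x, min (f x) N) ^ (1 - θ) * (∫⁻ x, min (g x) M) ^ θ ≤ ∫⁻ x, h x := fun N M =>
    prekopa_leindler_of_iSup_ne_top hθ₀ hθ₁ (hf.min measurable_const)
      (hg.min measurable_const) hh
      (ne_top_of_le_ne_top (ENNReal.natCast_ne_top N) (iSup_le fun _ => min_le_right _ _))
      (ne_top_of_le_ne_top (ENNReal.natCast_ne_top M) (iSup_le fun _ => min_le_right _ _))
      fun x y => (mul_le_mul' (ENNReal.rpow_le_rpow (min_le_left _ _) hθ₁'.le)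
        (ENNReal.rpow_le_rpow (min_le_left _ _) hθ₀.le)).trans (hfgh x y)
  rw [lintegral_eq_iSup_lintegral_min_natCast _ hf, lintegral_eq_iSup_lintegral_min_natCast _ hg,
    ENNReal.iSup_rpow _ hθ₁', ENNReal.iSup_rpow _ hθ₀, ENNReal.iSup_mul]
  refine iSup_le fun N => ?_
  rw [ENNReal.mul_iSup]
  exact iSup_le (htrunc N)

end Real

section FinCons

variable {α : Type*}

theorem MeasurableEquiv.piFinSuccAbove_zero_symm_eq_cons [MeasurableSpace α] (n : ℕ) :
    ⇑(MeasurableEquiv.piFinSuccAbove (fun _ : Fin (n + 1) => α) 0).symm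
      = fun p : α × (Fin n → α) => Fin.cons p.1 p.2 := by
  ext p : 1
  simp [MeasurableEquiv.piFinSuccAbove_symm_apply, Fin.insertNthEquiv, Fin.insertNth_zero']

theorem measurable_fin_cons [MeasurableSpace α] {n : ℕ} :
    Measurable fun p : α × (Fin n → α) => (Fin.cons p.1 p.2 : Fin (n + 1) → α) :=
  MeasurableEquiv.piFinSuccAbove_zero_symm_eq_cons (α := α) n ▸
    (MeasurableEquiv.piFinSuccAbove _ 0).symm.measurable

theorem lintegral_fin_cons [MeasureSpace α] [SigmaFinite (volume : Measure α)] {n : ℕ}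
    {f : (Fin (n + 1) → α) → ℝ≥0∞} (hf : Measurable f) :
    ∫⁻ z, f z = ∫⁻ p : Fin n → α, ∫⁻ x : α, f (Fin.cons x p) := by
  have hcons := (volume_preserving_piFinSuccAbove (fun _ : Fin (n + 1) => α) 0).symm
  rw [MeasurableEquiv.piFinSuccAbove_zero_symm_eq_cons] at hcons
  rw [← hcons.lintegral_comp hf]
  exact lintegral_prod_symm _ (hf.comp hcons.measurable).aemeasurable

end FinCons

theorem prekopa_leindler {θ : ℝ} (hθ₀ : 0 < θ) (hθ₁ : θ < 1) :
    ∀ {n : ℕ} {f g h : (Fin n → ℝ) → ℝ≥0∞}, Measurable f → Measurable g → Measurable h →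
      (∀ x y, f x ^ (1 - θ) * g y ^ θ ≤ h ((1 - θ) • x + θ • y)) →
      (∫⁻ x, f x) ^ (1 - θ) * (∫⁻ x, g x) ^ θ ≤ ∫⁻ x, h x
  | 0, f, g, h, _, _, _, hfgh => by
    have hvol : (volume : Measure (Fin 0 → ℝ)) univ = 1 := by
      rw [volume_pi, Measure.pi_univ]
      simp
    simp only [lintegral_unique, hvol, mul_one]
    convert hfgh default default
  | n + 1, f, g, h, hf, hg, hh, hfgh => by
    have hsection : ∀ {u : (Fin (n + 1) → ℝ) → ℝ≥0∞}, Measurable u → ∀ p : Fin n → ℝ,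
        Measurable fun x : ℝ => u (Fin.cons x p) := fun hu p =>
      (hu.comp measurable_fin_cons).comp (measurable_id.prodMk measurable_const)
    have hfiber : ∀ {u : (Fin (n + 1) → ℝ) → ℝ≥0∞}, Measurable u →
        Measurable fun p : Fin n → ℝ => ∫⁻ x : ℝ, u (Fin.cons x p) := fun hu =>
      (hu.comp measurable_fin_cons).lintegral_prod_left'
    rw [lintegral_fin_cons hf, lintegral_fin_cons hg, lintegral_fin_cons hh]
    refine prekopa_leindler hθ₀ hθ₁ (hfiber hf) (hfiber hg) (hfiber hh) fun p q => ?_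
    refine Real.prekopa_leindler hθ₀ hθ₁ (hsection hf p) (hsection hg q) (hsection hh _)
      fun x y => ?_
    convert hfgh (Fin.cons x p) (Fin.cons y q) using 2
    ext j
    cases j using Fin.cases <;> simp

theorem volume_rpow_mul_volume_rpow_le_of_smul_add_smul_subset {n : ℕ} {θ : ℝ} (hθ₀ : 0 < θ)
    (hθ₁ : θ < 1) {A B S : Set (Fin n → ℝ)} (hA : MeasurableSet A) (hB : MeasurableSet B)
    (hS : MeasurableSet S) (hABS : (1 - θ) • A + θ • B ⊆ S) :
    volume A ^ (1 - θ) * volume B ^ θ ≤ volume S := by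
  have hθ₁' : 0 < 1 - θ := by linarith
  have hind : ∀ {C : Set (Fin n → ℝ)}, MeasurableSet C →
      Measurable (C.indicator (1 : (Fin n → ℝ) → ℝ≥0∞)) := fun hC => measurable_one.indicator hC
  have := prekopa_leindler hθ₀ hθ₁ (hind hA) (hind hB) (hind hS) fun x y => ?_
  · rwa [lintegral_indicator_one hA, lintegral_indicator_one hB,
      lintegral_indicator_one hS] at this
  by_cases hx : x ∈ A
  · by_cases hy : y ∈ B
    · have : (1 - θ) • x + θ • y ∈ S :=
        hABS (add_mem_add (smul_mem_smul_set hx) (smul_mem_smul_set hy))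
      simp [hx, hy, this]
    · simp [hy, ENNReal.zero_rpow_of_pos hθ₀]
  · simp [hx, ENNReal.zero_rpow_of_pos hθ₁']

theorem brunn_minkowski {n : ℕ} (hn : 0 < n) {A B S : Set (Fin n → ℝ)} (hA : MeasurableSet A)
    (hB : MeasurableSet B) (hS : MeasurableSet S) (hA₀ : A.Nonempty) (hB₀ : B.Nonempty)
    (hABS : A + B ⊆ S) (hS_top : volume S ≠ ⊤) :
    (volume A).toReal ^ ((1 : ℝ) / n) + (volume B).toReal ^ ((1 : ℝ) / n)
      ≤ (volume S).toReal ^ ((1 : ℝ) / n) := by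
  have hAS := measure_le_of_add_subset volume hB₀ hABS
  have hBS := measure_le_of_add_subset volume hA₀ (add_comm A B ▸ hABS)
  have hn' : (0 : ℝ) < 1 / n := by positivity
  rcases (ENNReal.toReal_nonneg (a := volume A)).eq_or_lt with ha | ha
  · rw [← ha, Real.zero_rpow hn'.ne', zero_add]
    exact Real.rpow_le_rpow ENNReal.toReal_nonneg (ENNReal.toReal_mono hS_top hBS) hn'.le
  rcases (ENNReal.toReal_nonneg (a := volume B)).eq_or_lt with hb | hb
  · rw [← hb, Real.zero_rpow hn'.ne', add_zero]
    exact Real.rpow_le_rpow ENNReal.toReal_nonneg (ENNReal.toReal_mono hS_top hAS) hn'.le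
  set α := (volume A).toReal ^ ((1 : ℝ) / n)
  set β := (volume B).toReal ^ ((1 : ℝ) / n)
  have hα : 0 < α := Real.rpow_pos_of_pos ha _
  have hβ : 0 < β := Real.rpow_pos_of_pos hb _
  set σ := α + β
  have hσ : 0 < σ := by positivity
  -- `(σ / α) • A` and `(σ / β) • B` both have volume `σ ^ n`, and `A + B` is their convex
  -- combination with weights `α / σ` and `β / σ`
  have hrescale : ∀ {C : Set (Fin n → ℝ)} {c : ℝ}, 0 < c → volume C = ENNReal.ofReal c →
      volume ((σ / c ^ ((1 : ℝ) / n)) • C) = ENNReal.ofReal (σ ^ n) := by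
    intro C c hc hC
    rw [Measure.addHaar_smul_of_nonneg _ (by positivity), Module.finrank_fin_fun, hC,
      ← ENNReal.ofReal_mul (by positivity), div_pow, one_div,
      Real.rpow_inv_natCast_pow hc.le hn.ne', div_mul_cancel₀ _ hc.ne']
  have hθ₀ : 0 < β / σ := by positivity
  have hθ₁ : β / σ < 1 := (div_lt_one hσ).2 (by linarith)
  have h1θ : 1 - β / σ = α / σ := by field_simp; ring
  have hsub : (1 - β / σ) • ((σ / α) • A) + (β / σ) • ((σ / β) • B) ⊆ S := by
    rwa [smul_smul, smul_smul, h1θ, div_mul_div_cancel₀ hσ.ne', div_mul_div_cancel₀ hσ.ne',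
      div_self hα.ne', div_self hβ.ne', one_smul, one_smul]
  have key := volume_rpow_mul_volume_rpow_le_of_smul_add_smul_subset hθ₀ hθ₁ (hA.const_smul₀ _)
    (hB.const_smul₀ _) hS hsub
  rw [hrescale ha (ENNReal.ofReal_toReal (ne_top_of_le_ne_top hS_top hAS)).symm,
    hrescale hb (ENNReal.ofReal_toReal (ne_top_of_le_ne_top hS_top hBS)).symm,
    ← ENNReal.rpow_add_of_nonneg _ _ (by linarith) hθ₀.le, sub_add_cancel, ENNReal.rpow_one,
    ← ENNReal.ofReal_toReal hS_top, ENNReal.ofReal_le_ofReal_iff ENNReal.toReal_nonneg] at key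
  calc σ = (σ ^ n) ^ ((1 : ℝ) / n) := by rw [one_div, Real.pow_rpow_inv_natCast hσ.le hn.ne']
    _ ≤ (volume S).toReal ^ ((1 : ℝ) / n) := Real.rpow_le_rpow (by positivity) key hn'.le

theorem brunn_minkowski_and_volume_superadditivity_general {n : ℕ} (hn : 0 < n)
    (Δ₁ Δ₂ : Set (Fin n → ℝ))
    (h₁c : IsCompact Δ₁) (h₂c : IsCompact Δ₂)
    (h₁ne : Δ₁.Nonempty) (h₂ne : Δ₂.Nonempty) :
    (volume (Δ₁ + Δ₂)).toReal ^ ((1 : ℝ) / n)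
        ≥ (volume Δ₁).toReal ^ ((1 : ℝ) / n) + (volume Δ₂).toReal ^ ((1 : ℝ) / n) ∧
    ∀ Δ₁₂ : Set (Fin n → ℝ), IsCompact Δ₁₂ → Convex ℝ Δ₁₂ →
      Δ₁ + Δ₂ ⊆ Δ₁₂ →
      ∀ V₁ V₂ V₁₂ : ℝ,
        V₁ = n.factorial * (volume Δ₁).toReal →
        V₂ = n.factorial * (volume Δ₂).toReal →
        V₁₂ = n.factorial * (volume Δ₁₂).toReal →
        V₁₂ ^ ((1 : ℝ) / n) ≥ V₁ ^ ((1 : ℝ) / n) + V₂ ^ ((1 : ℝ) / n) := by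
  have hsum : IsCompact (Δ₁ + Δ₂) := h₁c.add h₂c
  refine ⟨brunn_minkowski hn h₁c.measurableSet h₂c.measurableSet hsum.measurableSet h₁ne h₂ne
    subset_rfl hsum.measure_lt_top.ne, ?_⟩
  rintro Δ₁₂ h₁₂c - hsub _ _ _ rfl rfl rfl
  have hfact : (0 : ℝ) ≤ n.factorial := by positivity
  rw [Real.mul_rpow hfact ENNReal.toReal_nonneg, Real.mul_rpow hfact ENNReal.toReal_nonneg,
    Real.mul_rpow hfact ENNReal.toReal_nonneg, ← mul_add]
  exact mul_le_mul_of_nonneg_left (brunn_minkowski hn h₁c.measurableSet h₂c.measurableSet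
    h₁₂c.measurableSet h₁ne h₂ne hsub h₁₂c.measure_lt_top.ne) (by positivity)

/-- Brunn–Minkowski for compact convex bodies in `ℝⁿ`, and the
resulting superadditivity `Vol(L₁+L₂)^{1/n} ≥ Vol(L₁)^{1/n} + Vol(L₂)^{1/n}` of
volumes of big line bundles, via Okounkov bodies: `Vol(Lᵢ) = n! · vol(Δᵢ)` and
`Δ₁ + Δ₂ ⊆ Δ₁₂ = Δ_v(L₁ + L₂)`. -/
theorem brunn_minkowski_and_volume_superadditivity {n : ℕ} (hn : 0 < n)
    (Δ₁ Δ₂ : Set (Fin n → ℝ))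
    (h₁c : IsCompact Δ₁) (h₂c : IsCompact Δ₂)
    (h₁conv : Convex ℝ Δ₁) (h₂conv : Convex ℝ Δ₂)
    (h₁ne : Δ₁.Nonempty) (h₂ne : Δ₂.Nonempty) :
    (volume (Δ₁ + Δ₂)).toReal ^ ((1 : ℝ) / n)
        ≥ (volume Δ₁).toReal ^ ((1 : ℝ) / n) + (volume Δ₂).toReal ^ ((1 : ℝ) / n) ∧
    ∀ Δ₁₂ : Set (Fin n → ℝ), IsCompact Δ₁₂ → Convex ℝ Δ₁₂ →
      Δ₁ + Δ₂ ⊆ Δ₁₂ →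
      ∀ V₁ V₂ V₁₂ : ℝ,
        V₁ = n.factorial * (volume Δ₁).toReal →
        V₂ = n.factorial * (volume Δ₂).toReal →
        V₁₂ = n.factorial * (volume Δ₁₂).toReal →
        V₁₂ ^ ((1 : ℝ) / n) ≥ V₁ ^ ((1 : ℝ) / n) + V₂ ^ ((1 : ℝ) / n) :=
  brunn_minkowski_and_volume_superadditivity_general hn Δ₁ Δ₂ h₁c h₂c h₁ne h₂ne
end
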